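/- Let n ≥ 3 and ℓ ≥ 1 be integers, and consider the polynomial ring ℂ[x₁,…,xₙ,u₁,u₃,…,uₙ] and the ideal generated by: x₁^ℓ − x₂u₁, and, for all 3 ≤ i, k ≤ n, the elements x₁^ℓuᵢ − xᵢu₁, xᵢ − x₂uᵢ and xᵢu_k − x_kuᵢ. Then the quotient ring is isomorphic as a ℂ-algebra to the polynomial ring in the n−2 variables u₃,…,uₙ over the ring ℂ[x₁,x₂,u₁]/(x₁^ℓ − x₂u₁). -/

import Mathlib

/-!
Setting `xᵢ = x₂uᵢ` for `i ≥ 3` eliminates the variables `x₃, …, xₙ`. After this substitution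
`x₁^ℓuᵢ − xᵢu₁` becomes `uᵢ(x₁^ℓ − x₂u₁)` and `xᵢu_k − x_kuᵢ` becomes `0`, so the only relation
left among `x₁, x₂, u₁, u₃, …, uₙ` is `x₁^ℓ − x₂u₁`.
-/

open MvPolynomial

theorem Fin.exists_eq_mk_succ {n : ℕ} (a : Fin n) (ha : 1 ≤ (a : ℕ)) :
    ∃ k h, a = (⟨k + 1, h⟩ : Fin n) :=
  ⟨a - 1, by omega, by ext; simp only; omega⟩

namespace CurvilinearFiberChart

noncomputable section

variable (K : Type*) [CommRing K] (m ℓ : ℕ)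

abbrev BaseRing : Type _ :=
  MvPolynomial (Fin 3) K ⧸ Ideal.span {(X 0 ^ ℓ - X 1 * X 2 : MvPolynomial (Fin 3) K)}

/-- With `n = m + 2`: `xₖ = X (.inl ⟨k - 1, _⟩)` for `1 ≤ k ≤ n`, `u₁ = X (.inr ⟨0, _⟩)` and
`uₖ = X (.inr ⟨k - 2, _⟩)` for `3 ≤ k ≤ n`. -/
def chartRelations : Set (MvPolynomial (Fin (m + 2) ⊕ Fin (m + 1)) K) :=
  ({X (.inl ⟨0, by omega⟩) ^ ℓ - X (.inl ⟨1, by omega⟩) * X (.inr ⟨0, by omega⟩)} ∪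
    {p | ∃ a : Fin (m + 1), 1 ≤ (a : ℕ) ∧
       p = X (.inl ⟨0, by omega⟩) ^ ℓ * X (.inr a) -
         X (.inl ⟨(a : ℕ) + 1, by omega⟩) * X (.inr ⟨0, by omega⟩)} ∪
    {p | ∃ a : Fin (m + 1), 1 ≤ (a : ℕ) ∧
       p = X (.inl ⟨(a : ℕ) + 1, by omega⟩) - X (.inl ⟨1, by omega⟩) * X (.inr a)} ∪
    {p | ∃ a b : Fin (m + 1), 1 ≤ (a : ℕ) ∧ 1 ≤ (b : ℕ) ∧
       p = X (.inl ⟨(a : ℕ) + 1, by omega⟩) * X (.inr b) -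
         X (.inl ⟨(b : ℕ) + 1, by omega⟩) * X (.inr a)})

abbrev ChartRing : Type _ :=
  MvPolynomial (Fin (m + 2) ⊕ Fin (m + 1)) K ⧸ Ideal.span (chartRelations K m ℓ)

variable {K ℓ}

abbrev baseVar (i : Fin 3) : BaseRing K ℓ := Ideal.Quotient.mk _ (X i)

theorem baseVar_pow : baseVar 0 ^ ℓ = (baseVar 1 * baseVar 2 : BaseRing K ℓ) := by
  rw [← map_pow, ← map_mul, Ideal.Quotient.eq]
  exact Ideal.subset_span rfl

variable (K ℓ) {m}

def chartVar : Fin (m + 2) ⊕ Fin (m + 1) → MvPolynomial (Fin m) (BaseRing K ℓ)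
  | .inl ⟨0, _⟩ => C (baseVar 0)
  | .inl ⟨1, _⟩ => C (baseVar 1)
  | .inl ⟨k + 2, h⟩ => C (baseVar 1) * X ⟨k, by omega⟩
  | .inr ⟨0, _⟩ => C (baseVar 2)
  | .inr ⟨k + 1, h⟩ => X ⟨k, by omega⟩

theorem aeval_chartVar_of_mem_chartRelations :
    ∀ p ∈ chartRelations K m ℓ, aeval (chartVar K ℓ) p = 0 := by
  have hrel : (C (baseVar 0) : MvPolynomial (Fin m) (BaseRing K ℓ)) ^ ℓ =
      C (baseVar 1) * C (baseVar 2) := by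
    rw [← map_pow, ← map_mul, baseVar_pow]
  rintro p (((rfl | ⟨a, ha, rfl⟩) | ⟨a, ha, rfl⟩) | ⟨a, b, ha, hb, rfl⟩)
  · simp only [map_sub, map_mul, map_pow, aeval_X, chartVar]
    exact sub_eq_zero.2 hrel
  · obtain ⟨a, _, rfl⟩ := a.exists_eq_mk_succ ha
    simp only [map_sub, map_mul, map_pow, aeval_X, chartVar]
    linear_combination X ⟨a, by omega⟩ * hrel
  · obtain ⟨a, _, rfl⟩ := a.exists_eq_mk_succ ha
    simp only [map_sub, map_mul, aeval_X, chartVar]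
    ring
  · obtain ⟨a, _, rfl⟩ := a.exists_eq_mk_succ ha
    obtain ⟨b, _, rfl⟩ := b.exists_eq_mk_succ hb
    simp only [map_sub, map_mul, aeval_X, chartVar]
    ring

abbrev chartVarClass (v : Fin (m + 2) ⊕ Fin (m + 1)) : ChartRing K m ℓ :=
  Ideal.Quotient.mk _ (X v)

theorem chartVarClass_inl_add_two (k : ℕ) (hk : k + 2 < m + 2) :
    chartVarClass K ℓ (.inl ⟨k + 2, hk⟩) =
      chartVarClass K ℓ (.inl ⟨1, by omega⟩) * chartVarClass K ℓ (.inr ⟨k + 1, by omega⟩) := by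
  rw [← map_mul, Ideal.Quotient.eq]
  exact Ideal.subset_span (Or.inl (Or.inr ⟨⟨k + 1, by omega⟩, by simp, rfl⟩))

variable (m)

def toPolynomial : ChartRing K m ℓ →ₐ[K] MvPolynomial (Fin m) (BaseRing K ℓ) :=
  Ideal.Quotient.liftₐ _ (aeval (chartVar K ℓ)) fun _ hp =>
    RingHom.mem_ker.1 <| (Ideal.span_le (I := RingHom.ker (aeval (chartVar K ℓ)))).2
      (aeval_chartVar_of_mem_chartRelations K ℓ) hp

theorem toPolynomial_chartVarClass (v : Fin (m + 2) ⊕ Fin (m + 1)) :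
    toPolynomial K m ℓ (chartVarClass K ℓ v) = chartVar K ℓ v :=
  aeval_X _ v

def chartBaseVar : Fin 3 → ChartRing K m ℓ :=
  ![chartVarClass K ℓ (.inl ⟨0, by omega⟩), chartVarClass K ℓ (.inl ⟨1, by omega⟩),
    chartVarClass K ℓ (.inr ⟨0, by omega⟩)]

theorem aeval_chartBaseVar_relation :
    aeval (chartBaseVar K m ℓ) (X 0 ^ ℓ - X 1 * X 2 : MvPolynomial (Fin 3) K) = 0 := by
  simp only [map_sub, map_mul, map_pow, aeval_X, chartBaseVar, Matrix.cons_val_zero,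
    Matrix.cons_val_one, Matrix.cons_val_two, Matrix.head_cons, Matrix.tail_cons, chartVarClass]
  rw [← map_pow, ← map_mul, ← map_sub, Ideal.Quotient.eq_zero_iff_mem]
  exact Ideal.subset_span (Or.inl (Or.inl (Or.inl rfl)))

def baseRingToChartRing : BaseRing K ℓ →ₐ[K] ChartRing K m ℓ :=
  Ideal.Quotient.liftₐ _ (aeval (chartBaseVar K m ℓ)) fun _ hp =>
    RingHom.mem_ker.1 <|
      (Ideal.span_singleton_le_iff_mem (RingHom.ker (aeval (chartBaseVar K m ℓ)))).2
        (aeval_chartBaseVar_relation K m ℓ) hp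

def ofPolynomial : MvPolynomial (Fin m) (BaseRing K ℓ) →ₐ[K] ChartRing K m ℓ :=
  aevalTower (baseRingToChartRing K m ℓ) fun j => chartVarClass K ℓ (.inr ⟨j + 1, by omega⟩)

theorem ofPolynomial_C_baseVar (i : Fin 3) :
    ofPolynomial K m ℓ (C (baseVar i)) = chartBaseVar K m ℓ i := by
  rw [ofPolynomial, aevalTower_C]
  exact aeval_X _ i

theorem ofPolynomial_X (j : Fin m) :
    ofPolynomial K m ℓ (X j) = chartVarClass K ℓ (.inr ⟨j + 1, by omega⟩) :=
  aevalTower_X _ _ _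

theorem ofPolynomial_comp_toPolynomial :
    (ofPolynomial K m ℓ).comp (toPolynomial K m ℓ) = AlgHom.id K _ := by
  apply Ideal.Quotient.algHom_ext
  apply MvPolynomial.algHom_ext
  rintro (⟨_ | _ | k, hk⟩ | ⟨_ | k, hk⟩) <;>
    simp only [AlgHom.comp_apply, Ideal.Quotient.mkₐ_eq_mk, AlgHom.id_apply,
      toPolynomial_chartVarClass, chartVar, ofPolynomial_C_baseVar, ofPolynomial_X, map_mul]
  case inl.succ.succ => exact (chartVarClass_inl_add_two K ℓ k hk).symm
  all_goals rfl

theorem toPolynomial_comp_ofPolynomial :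
    (toPolynomial K m ℓ).comp (ofPolynomial K m ℓ) = AlgHom.id K _ := by
  apply MvPolynomial.algHom_ext'
  · apply Ideal.Quotient.algHom_ext
    apply MvPolynomial.algHom_ext
    intro i
    simp only [AlgHom.comp_apply, Ideal.Quotient.mkₐ_eq_mk, IsScalarTower.coe_toAlgHom',
      algebraMap_eq, AlgHom.id_apply, ofPolynomial_C_baseVar]
    fin_cases i <;> exact toPolynomial_chartVarClass K m ℓ _
  · intro j
    rw [AlgHom.comp_apply, ofPolynomial_X, toPolynomial_chartVarClass]
    rfl

def chartEquiv : ChartRing K m ℓ ≃ₐ[K] MvPolynomial (Fin m) (BaseRing K ℓ) :=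
  .ofAlgHom (toPolynomial K m ℓ) (ofPolynomial K m ℓ) (toPolynomial_comp_ofPolynomial K m ℓ)
    (ofPolynomial_comp_toPolynomial K m ℓ)

end

end CurvilinearFiberChart

/-- Let `n ≥ 3` and `ℓ ≥ 1`. In `ℂ[x₁,…,xₙ,u₁,u₃,u₄,…,uₙ]` (with
`xₖ = X (Sum.inl ⟨k-1⟩)` for `1 ≤ k ≤ n`, `u₁ = X (Sum.inr ⟨0⟩)` and
`uₖ = X (Sum.inr ⟨k-2⟩)` for `3 ≤ k ≤ n`), the quotient by the ideal generated by
`x₁^ℓ − x₂u₁` and, for all `3 ≤ i, k ≤ n`, the elements `x₁^ℓuᵢ − xᵢu₁`, `xᵢ − x₂uᵢ`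
and `xᵢu_k − x_kuᵢ`, is isomorphic as a `ℂ`-algebra to the polynomial ring in `n−2`
variables over `ℂ[x₁,x₂,u₁]/(x₁^ℓ − x₂u₁)` (there: `x₁ = X 0`, `x₂ = X 1`, `u₁ = X 2`). -/
theorem stmt13 (n ℓ : ℕ) (hn : 3 ≤ n) :
    Nonempty
      ((MvPolynomial (Fin n ⊕ Fin (n - 1)) ℂ ⧸
          Ideal.span
            (({X (Sum.inl ⟨0, by omega⟩) ^ ℓ -
                 X (Sum.inl ⟨1, by omega⟩) * X (Sum.inr ⟨0, by omega⟩)} ∪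
              {p | ∃ a : Fin (n - 1), 1 ≤ (a : ℕ) ∧
                 p = X (Sum.inl ⟨0, by omega⟩) ^ ℓ * X (Sum.inr a) -
                   X (Sum.inl ⟨(a : ℕ) + 1, by have := a.isLt; omega⟩) *
                     X (Sum.inr ⟨0, by omega⟩)} ∪
              {p | ∃ a : Fin (n - 1), 1 ≤ (a : ℕ) ∧
                 p = X (Sum.inl ⟨(a : ℕ) + 1, by have := a.isLt; omega⟩) -
                   X (Sum.inl ⟨1, by omega⟩) * X (Sum.inr a)} ∪
              {p | ∃ a b : Fin (n - 1), 1 ≤ (a : ℕ) ∧ 1 ≤ (b : ℕ) ∧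
                 p = X (Sum.inl ⟨(a : ℕ) + 1, by have := a.isLt; omega⟩) * X (Sum.inr b) -
                   X (Sum.inl ⟨(b : ℕ) + 1, by have := b.isLt; omega⟩) * X (Sum.inr a)} :
              Set (MvPolynomial (Fin n ⊕ Fin (n - 1)) ℂ)))) ≃ₐ[ℂ]
        MvPolynomial (Fin (n - 2))
          (MvPolynomial (Fin 3) ℂ ⧸
            Ideal.span {(X 0 ^ ℓ - X 1 * X 2 : MvPolynomial (Fin 3) ℂ)})) := by
  obtain ⟨m, rfl⟩ : ∃ m, n = m + 2 := ⟨n - 2, by omega⟩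
  exact ⟨CurvilinearFiberChart.chartEquiv ℂ m ℓ⟩
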